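/- arXiv:2509.26343 — 5 statements merged into one kernel-verified Lean document; each statement's English description precedes it below -/
import Mathlib

section
/- Let P : E → B be a cloven Grothendieck fibration and (L, R) an orthogonal factorization system on B. Define L^P to be the class of morphisms of E lying over morphisms of L, and R^P the class of cartesian morphisms of E lying over morphisms of R. Then (L^P, R^P) is an orthogonal factorization system on E. -/
open CategoryTheory

universe v u

/-- An orthogonal factorization system `(L, R)` on a category `C`: both classes are
closed under composition and contain all isomorphisms, every morphism factors as a
morphism in `L` followed by a morphism in `R`, and every commutative square with left
edge in `L` and right edge in `R` admits a unique diagonal filler. -/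
structure OFS (C : Type u) [Category.{v} C] where
  L : MorphismProperty C
  R : MorphismProperty C
  L_comp : ∀ {X Y Z : C} (f : X ⟶ Y) (g : Y ⟶ Z), L f → L g → L (f ≫ g)
  R_comp : ∀ {X Y Z : C} (f : X ⟶ Y) (g : Y ⟶ Z), R f → R g → R (f ≫ g)
  L_iso : ∀ {X Y : C} (f : X ⟶ Y) [IsIso f], L f
  R_iso : ∀ {X Y : C} (f : X ⟶ Y) [IsIso f], R f
  fac : ∀ {X Y : C} (f : X ⟶ Y), ∃ (Z : C) (l : X ⟶ Z) (r : Z ⟶ Y), L l ∧ R r ∧ l ≫ r = f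
  lift : ∀ {A B X Y : C} (u : A ⟶ B) (v : X ⟶ Y) (f : A ⟶ X) (g : B ⟶ Y),
    L u → R v → f ≫ v = u ≫ g → ∃! e : B ⟶ X, u ≫ e = f ∧ e ≫ v = g

universe v₁ u₁ v₂ u₂

/-- A morphism `φ` of `E` is cartesian for `P : E ⥤ B` if every morphism `ψ` into its
codomain, together with a factorization of `P ψ` through `P φ`, lifts uniquely through
`φ`. -/
def IsCartesianMor {E : Type u₁} [Category.{v₁} E] {B : Type u₂} [Category.{v₂} B]
    (P : E ⥤ B) {x y : E} (φ : x ⟶ y) : Prop :=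
  ∀ {z : E} (ψ : z ⟶ y) (w : P.obj z ⟶ P.obj x), w ≫ P.map φ = P.map ψ →
    ∃! χ : z ⟶ x, χ ≫ φ = ψ ∧ P.map χ = w

/-- `P : E ⥤ B` is a (cloven) Grothendieck fibration: every morphism of `B` into the
image of an object of `E` admits a cartesian lift. -/
def IsFib {E : Type u₁} [Category.{v₁} E] {B : Type u₂} [Category.{v₂} B]
    (P : E ⥤ B) : Prop :=
  ∀ {y : E} {b : B} (r : b ⟶ P.obj y),
    ∃ (x : E) (φ : x ⟶ y) (h : P.obj x = b),
      IsCartesianMor P φ ∧ P.map φ = eqToHom h ≫ r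

lemma cartesian_id {E : Type u₁} [Category.{v₁} E] {B : Type u₂} [Category.{v₂} B]
    (P : E ⥤ B) {x y : E} (φ : x ⟶ y) [IsIso φ] : IsCartesianMor P φ := by
  intro z ψ w hw
  refine ⟨ψ ≫ inv φ, ⟨by simp, ?_⟩, ?_⟩
  · rw [P.map_comp, P.map_inv, ← hw]
    simp
  · rintro χ ⟨h1, -⟩
    rw [← h1]; simp

lemma cartesian_comp {E : Type u₁} [Category.{v₁} E] {B : Type u₂} [Category.{v₂} B]
    (P : E ⥤ B) {x y z : E} (φ : x ⟶ y) (γ : y ⟶ z)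
    (hφ : IsCartesianMor P φ) (hγ : IsCartesianMor P γ) : IsCartesianMor P (φ ≫ γ) := by
  intro w ψ u hu
  obtain ⟨χ₁, ⟨h1, h2⟩, huniq1⟩ := hγ ψ (u ≫ P.map φ) (by rw [Category.assoc, ← P.map_comp, hu])
  obtain ⟨χ, ⟨h3, h4⟩, huniq⟩ := hφ χ₁ u h2.symm
  refine ⟨χ, ⟨by rw [← Category.assoc, h3, h1], h4⟩, ?_⟩
  rintro χ' ⟨h5, h6⟩
  have : χ' ≫ φ = χ₁ := huniq1 _ ⟨by rw [Category.assoc, h5], by rw [P.map_comp, h6]⟩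
  exact huniq _ ⟨this, h6⟩

/-- Lifting an orthogonal factorization system along a Grothendieck fibration: if
`P : E ⥤ B` is a fibration and `(L, R)` is an OFS on `B`, then `E` carries an OFS whose
left class consists of the morphisms lying over morphisms of `L` and whose right class
consists of the cartesian morphisms lying over morphisms of `R`. -/
theorem stmt13 {E : Type u₁} [Category.{v₁} E] {B : Type u₂} [Category.{v₂} B]
    (P : E ⥤ B) (hP : IsFib P) (S : OFS B) :
    ∃ T : OFS E,
      (∀ {x y : E} (φ : x ⟶ y), T.L φ ↔ S.L (P.map φ)) ∧
      (∀ {x y : E} (φ : x ⟶ y), T.R φ ↔ IsCartesianMor P φ ∧ S.R (P.map φ)) := by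
  refine ⟨{
    L := fun {x y} φ => S.L (P.map φ)
    R := fun {x y} φ => IsCartesianMor P φ ∧ S.R (P.map φ)
    L_comp := by
      intro X Y Z f g hf hg
      rw [P.map_comp]; exact S.L_comp _ _ hf hg
    R_comp := by
      rintro X Y Z f g ⟨hf1, hf2⟩ ⟨hg1, hg2⟩
      exact ⟨cartesian_comp P f g hf1 hg1, by rw [P.map_comp]; exact S.R_comp _ _ hf2 hg2⟩
    L_iso := by intro X Y f _; exact S.L_iso (P.map f)
    R_iso := by intro X Y f _; exact ⟨cartesian_id P f, S.R_iso (P.map f)⟩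
    fac := ?_
    lift := ?_ }, fun φ => Iff.rfl, fun φ => Iff.rfl⟩
  · -- factorization
    intro X Y f
    obtain ⟨Z, l, r, hl, hr, hlr⟩ := S.fac (P.map f)
    obtain ⟨x', φ, h, hcart, hmap⟩ := hP r
    obtain ⟨χ, ⟨h1, h2⟩, -⟩ := hcart f (l ≫ eqToHom h.symm) (by
      rw [Category.assoc, hmap, eqToHom_trans_assoc, eqToHom_refl, Category.id_comp, hlr])
    refine ⟨x', χ, φ, ?_, ⟨hcart, ?_⟩, h1⟩
    · show S.L (P.map χ)
      rw [h2]; exact S.L_comp _ _ hl (S.L_iso _)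
    · show S.R (P.map φ)
      rw [hmap]; exact S.R_comp _ _ (S.R_iso _) hr
  · -- lifting
    intro A b X Y u v f g hu hv hsq
    obtain ⟨hcart, hvR⟩ := hv
    obtain ⟨d, ⟨hd1, hd2⟩, hduniq⟩ := S.lift (P.map u) (P.map v) (P.map f) (P.map g) hu hvR
      (by rw [← P.map_comp, ← P.map_comp, hsq])
    obtain ⟨e, ⟨he1, he2⟩, heuniq⟩ := hcart g d hd2
    have hue : u ≫ e = f := by
      obtain ⟨χ, -, huniq⟩ := hcart (f ≫ v) (P.map f) (P.map_comp f v).symm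
      have h1 : u ≫ e = χ := huniq _ ⟨by rw [Category.assoc, he1, hsq], by rw [P.map_comp, he2, hd1]⟩
      have h2 : f = χ := huniq _ ⟨rfl, rfl⟩
      rw [h1, h2]
    refine ⟨e, ⟨hue, he1⟩, ?_⟩
    rintro e' ⟨h1, h2⟩
    have : P.map e' = d := hduniq _ ⟨by rw [← P.map_comp, h1], by rw [← P.map_comp, h2]⟩
    exact heuniq _ ⟨h2, this⟩
end

section
/- Let P : E → B be a cloven Grothendieck opfibration and (L, R) an orthogonal factorization system on B. Define L^P to be the class of cocartesian morphisms of E lying over morphisms of L, and R^P the class of all morphisms of E lying over morphisms of R. Then (L^P, R^P) is an orthogonal factorization system on E. -/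
open CategoryTheory

universe v u

universe v₁ u₁ v₂ u₂

/-- A morphism `φ` of `E` is cocartesian for `P : E ⥤ B` if every morphism `ψ` out of
its domain, together with a factorization of `P ψ` through `P φ`, lifts uniquely
through `φ`. -/
def IsCocartesianMor {E : Type u₁} [Category.{v₁} E] {B : Type u₂} [Category.{v₂} B]
    (P : E ⥤ B) {x y : E} (φ : x ⟶ y) : Prop :=
  ∀ {z : E} (ψ : x ⟶ z) (w : P.obj y ⟶ P.obj z), P.map φ ≫ w = P.map ψ →
    ∃! χ : y ⟶ z, φ ≫ χ = ψ ∧ P.map χ = w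

/-- `P : E ⥤ B` is a (cloven) Grothendieck opfibration: every morphism of `B` out of
the image of an object of `E` admits a cocartesian lift. -/
def IsOpFib {E : Type u₁} [Category.{v₁} E] {B : Type u₂} [Category.{v₂} B]
    (P : E ⥤ B) : Prop :=
  ∀ {x : E} {b : B} (r : P.obj x ⟶ b),
    ∃ (y : E) (φ : x ⟶ y) (h : P.obj y = b),
      IsCocartesianMor P φ ∧ P.map φ ≫ eqToHom h = r


lemma cocart_comp {E : Type u₁} [Category.{v₁} E] {B : Type u₂} [Category.{v₂} B]
    (P : E ⥤ B) {x y z : E} {φ : x ⟶ y} {χ : y ⟶ z}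
    (hφ : IsCocartesianMor P φ) (hχ : IsCocartesianMor P χ) :
    IsCocartesianMor P (φ ≫ χ) := by
  intro w ψ t ht
  have h1 : P.map φ ≫ (P.map χ ≫ t) = P.map ψ := by
    simpa [Functor.map_comp, Category.assoc] using ht
  obtain ⟨α, ⟨hα1, hα2⟩, hαu⟩ := hφ ψ (P.map χ ≫ t) h1
  obtain ⟨β, ⟨hβ1, hβ2⟩, hβu⟩ := hχ α t hα2.symm
  refine ⟨β, ⟨by rw [Category.assoc, hβ1, hα1], hβ2⟩, ?_⟩
  rintro β' ⟨h1', h2'⟩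
  have hcb : χ ≫ β' = α := hαu (χ ≫ β')
    ⟨by simpa [Category.assoc] using h1', by simp [Functor.map_comp, h2']⟩
  exact hβu β' ⟨hcb, h2'⟩

lemma cocart_iso {E : Type u₁} [Category.{v₁} E] {B : Type u₂} [Category.{v₂} B]
    (P : E ⥤ B) {x y : E} (φ : x ⟶ y) [IsIso φ] : IsCocartesianMor P φ := by
  intro z ψ w hw
  refine ⟨inv φ ≫ ψ, ⟨by simp, ?_⟩, ?_⟩
  · rw [Functor.map_comp, ← hw, P.map_inv]
    simp
  · rintro χ ⟨h1, _⟩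
    rw [← h1]; simp

/-- Lifting an orthogonal factorization system along a Grothendieck opfibration. -/
theorem stmt15 {E : Type u₁} [Category.{v₁} E] {B : Type u₂} [Category.{v₂} B]
    (P : E ⥤ B) (hP : IsOpFib P) (S : OFS B) :
    ∃ T : OFS E,
      (∀ {x y : E} (φ : x ⟶ y), T.L φ ↔ IsCocartesianMor P φ ∧ S.L (P.map φ)) ∧
      (∀ {x y : E} (φ : x ⟶ y), T.R φ ↔ S.R (P.map φ)) := by
  refine ⟨{
    L := fun _ _ φ => IsCocartesianMor P φ ∧ S.L (P.map φ)
    R := fun _ _ φ => S.R (P.map φ)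
    L_comp := ?_
    R_comp := ?_
    L_iso := ?_
    R_iso := ?_
    fac := ?_
    lift := ?_ }, fun φ => Iff.rfl, fun φ => Iff.rfl⟩
  · rintro X Y Z f g ⟨hf, hf'⟩ ⟨hg, hg'⟩
    exact ⟨cocart_comp P hf hg, by rw [Functor.map_comp]; exact S.L_comp _ _ hf' hg'⟩
  · intro X Y Z f g hf hg
    rw [Functor.map_comp]; exact S.R_comp _ _ hf hg
  · intro X Y f hf
    exact ⟨cocart_iso P f, S.L_iso _⟩
  · intro X Y f hf
    exact S.R_iso _
  · intro X Y f
    obtain ⟨Z, l, r, hl, hr, hlr⟩ := S.fac (P.map f)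
    obtain ⟨z, φ, h, hφ, hφl⟩ := hP l
    have hw : P.map φ ≫ (eqToHom h ≫ r) = P.map f := by
      rw [← Category.assoc, hφl, hlr]
    obtain ⟨χ, ⟨hχ1, hχ2⟩, -⟩ := hφ f _ hw
    refine ⟨z, φ, χ, ⟨hφ, ?_⟩, ?_, hχ1⟩
    · have hPφ : P.map φ = l ≫ eqToHom h.symm := by rw [← hφl]; simp
      rw [hPφ]; exact S.L_comp _ _ hl (S.L_iso _)
    · show S.R (P.map χ)
      rw [hχ2]; exact S.R_comp _ _ (S.R_iso _) hr
  · rintro A b X Y u v f g ⟨hu, hu'⟩ hv hsq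
    have hsqB : P.map f ≫ P.map v = P.map u ≫ P.map g := by
      rw [← Functor.map_comp, ← Functor.map_comp, hsq]
    obtain ⟨d, ⟨hd1, hd2⟩, hdu⟩ := S.lift (P.map u) (P.map v) (P.map f) (P.map g) hu' hv hsqB
    obtain ⟨e, ⟨he1, he2⟩, heu⟩ := hu f d hd1
    have hev : e ≫ v = g := by
      obtain ⟨c, -, hcu⟩ := hu (u ≫ g) (P.map g) (by rw [← Functor.map_comp])
      have h1 : e ≫ v = c := hcu (e ≫ v)
        ⟨by rw [← Category.assoc, he1, hsq], by rw [Functor.map_comp, he2, hd2]⟩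
      have h2 : g = c := hcu g ⟨rfl, rfl⟩
      rw [h1, h2]
    refine ⟨e, ⟨he1, hev⟩, ?_⟩
    rintro e' ⟨h1', h2'⟩
    have hde : P.map e' = d := hdu (P.map e')
      ⟨by rw [← Functor.map_comp, h1'], by rw [← Functor.map_comp, h2']⟩
    exact heu e' ⟨h1', hde⟩
end

section
/- In the arrow category C^→ of a category C equipped with an orthogonal factorization system (L, R), the classes L^dom = { squares (u, v) with u ∈ L } and R^dom = { squares (u, v) with u ∈ R and v an isomorphism } form an orthogonal factorization system on C^→; a square (u, v) : f → g factors as (ℓ_u, v) followed by (r_u, id), through the object g ∘ r_u : Q(u) → B'. -/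
open CategoryTheory

universe v u

/-- An orthogonal factorization system together with a choice of factorization
`f = l f ≫ r f` for every morphism `f`, with middle object (image) `im f`. -/
structure ChosenOFS (C : Type u) [Category.{v} C] extends OFS C where
  im : ∀ {X Y : C}, (X ⟶ Y) → C
  l : ∀ {X Y : C} (f : X ⟶ Y), X ⟶ im f
  r : ∀ {X Y : C} (f : X ⟶ Y), im f ⟶ Y
  l_mem : ∀ {X Y : C} (f : X ⟶ Y), L (l f)
  r_mem : ∀ {X Y : C} (f : X ⟶ Y), R (r f)
  fac_eq : ∀ {X Y : C} (f : X ⟶ Y), l f ≫ r f = f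

/-!
Squares with invertible bottom edge are the `dom`-cartesian morphisms of `C^→`: such a square
is determined by its top edge, and every compatible top edge extends to one. Hence a lifting
problem in `C^→` against the right class reduces to one between top edges in `C`, which
`(L, R)` solves uniquely; factorizations are built on top edges, the first square carrying
the whole bottom edge of the original one.
-/

namespace CategoryTheory.Arrow

variable {C : Type u} [Category.{v} C]

lemma hom_ext_of_isIso_right {B X Y : Arrow C} (p : X ⟶ Y) [IsIso p.right] {e e' : B ⟶ X}
    (h_left : e.left = e'.left) (h_comp : e ≫ p = e' ≫ p) : e = e' := by
  refine Arrow.hom_ext _ _ h_left ?_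
  rw [← cancel_mono p.right, ← comp_right, ← comp_right, h_comp]

@[simps!]
noncomputable def liftOfIsIsoRight {B X Y : Arrow C} (p : X ⟶ Y) [IsIso p.right] (w : B ⟶ Y)
    (e : B.left ⟶ X.left) (he : e ≫ p.left = w.left) : B ⟶ X :=
  Arrow.homMk e (w.right ≫ inv p.right) <| by
    rw [← cancel_mono p.right]
    simp only [Category.assoc, IsIso.inv_hom_id, Category.comp_id]
    rw [← Arrow.w p, reassoc_of% he, Arrow.w w]

@[simp]
lemma liftOfIsIsoRight_comp {B X Y : Arrow C} (p : X ⟶ Y) [IsIso p.right] (w : B ⟶ Y)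
    (e : B.left ⟶ X.left) (he : e ≫ p.left = w.left) : liftOfIsIsoRight p w e he ≫ p = w :=
  Arrow.hom_ext _ _ he (by simp)

@[simps!]
def facLeftSquare {f g : Arrow C} (sq : f ⟶ g) {Z : C} (l : f.left ⟶ Z) (r : Z ⟶ g.left)
    (h : l ≫ r = sq.left) : f ⟶ Arrow.mk (r ≫ g.hom) :=
  Arrow.homMk l sq.right (by simp [reassoc_of% h, Arrow.w])

@[simps!]
def facRightSquare (g : Arrow C) {Z : C} (r : Z ⟶ g.left) : Arrow.mk (r ≫ g.hom) ⟶ g :=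
  Arrow.homMk r (𝟙 g.right) (by simp)

@[simp]
lemma facLeftSquare_comp_facRightSquare {f g : Arrow C} (sq : f ⟶ g) {Z : C}
    (l : f.left ⟶ Z) (r : Z ⟶ g.left) (h : l ≫ r = sq.left) :
    facLeftSquare sq l r h ≫ facRightSquare g r = sq :=
  Arrow.hom_ext _ _ (by simpa using h) (by simp)

end CategoryTheory.Arrow

namespace OFS

variable {C : Type u} [Category.{v} C]

open Arrow in
lemma existsUnique_lift_arrow (S : OFS C) {A B X Y : Arrow C} (i : A ⟶ B) (p : X ⟶ Y)
    (f : A ⟶ X) (g : B ⟶ Y) (hi : S.L i.left) (hp : S.R p.left) [IsIso p.right]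
    (h : f ≫ p = i ≫ g) : ∃! e : B ⟶ X, i ≫ e = f ∧ e ≫ p = g := by
  obtain ⟨e, ⟨he_left, he_right⟩, he_unique⟩ :=
    S.lift i.left p.left f.left g.left hi hp (by simpa using congrArg Hom.left h)
  refine ⟨liftOfIsIsoRight p g e he_right, ⟨?_, by simp⟩, fun e' ⟨h₁, h₂⟩ => ?_⟩
  · exact hom_ext_of_isIso_right p (by simpa using he_left) (by simp [h])
  · refine hom_ext_of_isIso_right p ?_ (by simp [h₂])
    exact he_unique e'.left ⟨by simpa using congrArg Hom.left h₁,
      by simpa using congrArg Hom.left h₂⟩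

noncomputable def liftDom (S : OFS C) : OFS (Arrow C) where
  L := fun _ _ sq => S.L sq.left
  R := fun _ _ sq => S.R sq.left ∧ IsIso sq.right
  L_comp f g hf hg := S.L_comp f.left g.left hf hg
  R_comp f g hf hg := by
    have := hf.2
    have := hg.2
    exact ⟨S.R_comp f.left g.left hf.1 hg.1, by rw [Arrow.comp_right]; infer_instance⟩
  L_iso f _ := S.L_iso f.left
  R_iso f _ := ⟨S.R_iso f.left, inferInstance⟩
  fac {_ g} sq := by
    obtain ⟨Z, l, r, hl, hr, h⟩ := S.fac sq.left
    exact ⟨_, _, _, hl, ⟨hr, inferInstanceAs (IsIso (𝟙 g.right))⟩,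
      Arrow.facLeftSquare_comp_facRightSquare sq l r h⟩
  lift i p f g hi hp h :=
    have := hp.2
    S.existsUnique_lift_arrow i p f g hi hp.1 h

end OFS

/-- The lift of an OFS `(L, R)` on `C` along the domain fibration `dom : C^→ ⥤ C`:
the arrow category carries an OFS whose left class consists of squares with top
component in `L` and whose right class consists of squares with top component in `R`
and invertible bottom component; a square `(u, v) : f ⟶ g` factors as `(ℓ_u, v)`
followed by `(r_u, 𝟙)` through the object `r_u ≫ g.hom : Q(u) ⟶ g.right`. -/
theorem stmt16 {C : Type u} [Category.{v} C] (S : ChosenOFS C) :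
    ∃ T : OFS (Arrow C),
      (∀ {f g : Arrow C} (sq : f ⟶ g), T.L sq ↔ S.L sq.left) ∧
      (∀ {f g : Arrow C} (sq : f ⟶ g), T.R sq ↔ S.R sq.left ∧ IsIso sq.right) ∧
      (∀ {f g : Arrow C} (sq : f ⟶ g),
        ∃ (a : f ⟶ Arrow.mk (S.r sq.left ≫ g.hom))
          (b : Arrow.mk (S.r sq.left ≫ g.hom) ⟶ g),
          a.left = S.l sq.left ∧ a.right = sq.right ∧
          b.left = S.r sq.left ∧ b.right = 𝟙 g.right ∧ a ≫ b = sq) :=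
  ⟨S.liftDom, fun _ => Iff.rfl, fun _ => Iff.rfl, fun {_ g} sq =>
    ⟨Arrow.facLeftSquare sq _ _ (S.fac_eq sq.left), Arrow.facRightSquare g _,
      rfl, rfl, rfl, rfl, Arrow.facLeftSquare_comp_facRightSquare sq _ _ (S.fac_eq sq.left)⟩⟩
end

section
/- In the arrow category C^→ of a category C with an orthogonal factorization system (L, R), the classes L^cod = { squares (u, v) with v ∈ L and u an isomorphism } and R^cod = { squares (u, v) with v ∈ R } form an orthogonal factorization system on C^→. -/
open CategoryTheory

universe v u

/-- The lift of an OFS `(L, R)` on `C` along the codomain opfibration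
`cod : C^→ ⥤ C`: the arrow category carries an OFS whose left class consists of
squares with bottom component in `L` and invertible top component, and whose right
class consists of squares with bottom component in `R`. -/
theorem stmt17 {C : Type u} [Category.{v} C] (S : OFS C) :
    ∃ T : OFS (Arrow C),
      (∀ {f g : Arrow C} (sq : f ⟶ g), T.L sq ↔ IsIso sq.left ∧ S.L sq.right) ∧
      (∀ {f g : Arrow C} (sq : f ⟶ g), T.R sq ↔ S.R sq.right) := by
  refine ⟨{
    L := fun _ _ sq => IsIso sq.left ∧ S.L sq.right
    R := fun _ _ sq => S.R sq.right
    L_comp := fun f g hf hg => by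
      obtain ⟨hf1, hf2⟩ := hf
      obtain ⟨hg1, hg2⟩ := hg
      refine ⟨?_, S.L_comp _ _ hf2 hg2⟩
      simp only [Arrow.comp_left]
      infer_instance
    R_comp := fun f g hf hg => S.R_comp _ _ hf hg
    L_iso := fun f hf => by
      haveI : IsIso ((Arrow.leftFunc).map f) := inferInstance
      haveI : IsIso ((Arrow.rightFunc).map f) := inferInstance
      exact ⟨‹IsIso ((Arrow.leftFunc).map f)›, S.L_iso f.right⟩
    R_iso := fun f hf => by
      haveI : IsIso ((Arrow.rightFunc).map f) := inferInstance
      exact S.R_iso f.right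
    fac := fun {f g} sq => by
      obtain ⟨Z, l, r, hl, hr, hlr⟩ := S.fac sq.right
      refine ⟨Arrow.mk (f.hom ≫ l),
        Arrow.homMk (u := 𝟙 f.left) (v := l) (by simp),
        Arrow.homMk (u := sq.left) (v := r)
          (by simp [← hlr, ← Category.assoc, sq.w]), ⟨by simp only [Arrow.homMk_left]; infer_instance, hl⟩, hr, ?_⟩
      ext
      · simp
      · simpa using hlr
    lift := fun {a b x y} u v f g hu hv hfg => by
      obtain ⟨hu1, hu2⟩ := hu
      obtain ⟨er, ⟨her1, her2⟩, heru⟩ := S.lift u.right v.right f.right g.right hu2 hv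
        (by rw [← Arrow.comp_right, ← Arrow.comp_right, hfg])
      have hbhom : b.hom = inv u.left ≫ a.hom ≫ u.right := by
        rw [← Arrow.w u, IsIso.inv_hom_id_assoc]
      refine ⟨Arrow.homMk (u := inv u.left ≫ f.left) (v := er) ?_, ⟨?_, ?_⟩, ?_⟩
      · rw [Category.assoc, Arrow.w f, hbhom, Category.assoc, Category.assoc, her1]
      · ext
        · simp
        · simpa using her1
      · ext
        · have := congrArg CommaMorphism.left hfg
          simp only [Arrow.comp_left] at this ⊢
          simp [Category.assoc, this]
        · simpa using her2
      · intro e' ⟨he1, he2⟩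
        ext
        · have := congrArg CommaMorphism.left he1
          simp only [Arrow.comp_left] at this
          simp [← this]
        · exact heru e'.right ⟨congrArg CommaMorphism.right he1,
            congrArg CommaMorphism.right he2⟩
  }, fun sq => Iff.rfl, fun sq => Iff.rfl⟩
end

section
/- Let C be a finitely complete category with an orthogonal factorization system (L, R). Then the arrow category C^→ carries an orthogonal factorization system whose left class consists of squares (u, v) with v ∈ L, and whose right class consists of pullback squares (u, v) with v ∈ R; the factorization of a square (u, v) : f → g passes through the pullback of g along r_v, i.e., f factors as A → A' ×_{B'} Q(v) → A' over B → Q(v) → B'. -/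
open CategoryTheory

universe v u

open CategoryTheory.Limits

/-!
A square `(u, v) : f ⟶ g` factors as `f ⟶ g ×_{B'} Q ⟶ g` as soon as `v = l ≫ r` through `Q`:
the bottom row is `l, r`, and the top row is the induced map into the pullback followed by
its projection. Pullback squares are cartesian for the codomain functor `Arrow C ⥤ C`, so a
lift of squares against a pullback square is determined by, and exists for, any lift of the
bottom components; orthogonality in `C` therefore lifts to squares with bottom edge in `L`
against pullback squares with bottom edge in `R`.
-/

namespace CategoryTheory.Arrow

variable {C : Type u} [Category.{v} C]

theorem hom_ext_of_isPullback {f g h : Arrow C} {v : g ⟶ h}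
    (hv : IsPullback v.left g.hom h.hom v.right) {e e' : f ⟶ g}
    (hl : e ≫ v = e' ≫ v) (hr : e.right = e'.right) : e = e' := by
  refine Arrow.hom_ext _ _ (hv.hom_ext ?_ (by rw [Arrow.w, Arrow.w, hr])) hr
  simpa using Arrow.hom.congr_left hl

theorem exists_hom_of_isPullback {f g h : Arrow C} {v : g ⟶ h}
    (hv : IsPullback v.left g.hom h.hom v.right) (b : f ⟶ h) (er : f.right ⟶ g.right)
    (w : er ≫ v.right = b.right) : ∃ e : f ⟶ g, e.right = er ∧ e ≫ v = b := by
  have hlift : b.left ≫ h.hom = (f.hom ≫ er) ≫ v.right := by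
    rw [Category.assoc, w, Arrow.w]
  refine ⟨Arrow.homMk (u := hv.lift _ _ hlift) (v := er) (hv.lift_snd _ _ _), rfl, ?_⟩
  exact Arrow.hom_ext _ _ (hv.lift_fst _ _ _) w

variable [HasPullbacks C]

noncomputable abbrev baseChange (g : Arrow C) {Q : C} (r : Q ⟶ g.right) : Arrow C :=
  Arrow.mk (pullback.snd g.hom r)

noncomputable def baseChangeFst (g : Arrow C) {Q : C} (r : Q ⟶ g.right) :
    baseChange g r ⟶ g :=
  Arrow.homMk (u := pullback.fst g.hom r) (v := r) pullback.condition

theorem isPullback_baseChangeFst (g : Arrow C) {Q : C} (r : Q ⟶ g.right) :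
    IsPullback (baseChangeFst g r).left (baseChange g r).hom g.hom (baseChangeFst g r).right :=
  IsPullback.of_hasPullback g.hom r

noncomputable def toBaseChange {f g : Arrow C} (sq : f ⟶ g) {Q : C} (l : f.right ⟶ Q)
    (r : Q ⟶ g.right) (h : l ≫ r = sq.right) : f ⟶ baseChange g r :=
  Arrow.homMk (v := l)
    (u := pullback.lift sq.left (f.hom ≫ l) (by rw [Category.assoc, h, Arrow.w]))
    (pullback.lift_snd _ _ _)

theorem toBaseChange_comp_baseChangeFst {f g : Arrow C} (sq : f ⟶ g) {Q : C}
    (l : f.right ⟶ Q) (r : Q ⟶ g.right) (h : l ≫ r = sq.right) :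
    toBaseChange sq l r h ≫ baseChangeFst g r = sq :=
  Arrow.hom_ext _ _ (pullback.lift_fst _ _ _) h

end CategoryTheory.Arrow

namespace OFS

variable {C : Type u} [Category.{v} C] (S : OFS C)

theorem existsUnique_arrow_lift {f g h k : Arrow C} (u : f ⟶ g) (v : h ⟶ k) (a : f ⟶ h)
    (b : g ⟶ k) (hu : S.L u.right) (hv : S.R v.right)
    (hpb : IsPullback v.left h.hom k.hom v.right) (w : a ≫ v = u ≫ b) :
    ∃! e : g ⟶ h, u ≫ e = a ∧ e ≫ v = b := by
  obtain ⟨er, ⟨her₁, her₂⟩, uniq⟩ :=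
    S.lift u.right v.right a.right b.right hu hv (by simpa using Arrow.hom.congr_right w)
  obtain ⟨e, rfl, he⟩ := Arrow.exists_hom_of_isPullback hpb b er her₂
  refine ⟨e, ⟨?_, he⟩, fun e' ⟨h₁, h₂⟩ => ?_⟩
  · exact Arrow.hom_ext_of_isPullback hpb (by rw [Category.assoc, he, w]) (by simpa using her₁)
  · refine Arrow.hom_ext_of_isPullback hpb (by rw [h₂, he]) (uniq _ ⟨?_, ?_⟩)
    · simpa using Arrow.hom.congr_right h₁
    · simpa using Arrow.hom.congr_right h₂

noncomputable def arrow [HasPullbacks C] : OFS (Arrow C) where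
  L _ _ sq := S.L sq.right
  R f g sq := S.R sq.right ∧ IsPullback sq.left f.hom g.hom sq.right
  L_comp sq sq' h h' := S.L_comp _ _ h h'
  R_comp sq sq' h h' := ⟨S.R_comp _ _ h.1 h'.1, h.2.paste_horiz h'.2⟩
  L_iso sq _ := S.L_iso sq.right
  R_iso sq _ := ⟨S.R_iso sq.right, IsPullback.of_horiz_isIso ⟨sq.w⟩⟩
  fac {f g} sq := by
    obtain ⟨Q, l, r, hl, hr, h⟩ := S.fac sq.right
    exact ⟨_, Arrow.toBaseChange sq l r h, Arrow.baseChangeFst g r, hl,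
      ⟨hr, Arrow.isPullback_baseChangeFst g r⟩, Arrow.toBaseChange_comp_baseChangeFst sq l r h⟩
  lift u v a b hu hv w := S.existsUnique_arrow_lift u v a b hu hv.1 hv.2 w

end OFS

/-- For a finitely complete category `C` with an OFS `(L, R)`, the arrow category
carries an OFS whose left class consists of squares with bottom component in `L` and
whose right class consists of pullback squares with bottom component in `R`; the
factorization of a square `(u, v) : f ⟶ g` passes through the pullback of `g` along
`r_v`, i.e. through the arrow `A' ×_{B'} Q(v) ⟶ Q(v)`. -/
theorem stmt18 {C : Type u} [Category.{v} C] [HasFiniteLimits C] (S : ChosenOFS C) :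
    ∃ T : OFS (Arrow C),
      (∀ {f g : Arrow C} (sq : f ⟶ g), T.L sq ↔ S.L sq.right) ∧
      (∀ {f g : Arrow C} (sq : f ⟶ g),
        T.R sq ↔ S.R sq.right ∧ IsPullback sq.left f.hom g.hom sq.right) ∧
      (∀ {f g : Arrow C} (sq : f ⟶ g),
        ∃ (a : f ⟶ Arrow.mk (pullback.snd g.hom (S.r sq.right)))
          (b : Arrow.mk (pullback.snd g.hom (S.r sq.right)) ⟶ g),
          a.right = S.l sq.right ∧
          a.left ≫ pullback.fst g.hom (S.r sq.right) = sq.left ∧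
          a.left ≫ pullback.snd g.hom (S.r sq.right) = f.hom ≫ S.l sq.right ∧
          b.left = pullback.fst g.hom (S.r sq.right) ∧
          b.right = S.r sq.right ∧ a ≫ b = sq) :=
  ⟨S.arrow, fun _ => Iff.rfl, fun _ => Iff.rfl, fun {_ g} sq =>
    ⟨Arrow.toBaseChange sq _ _ (S.fac_eq sq.right), Arrow.baseChangeFst g _, rfl,
      pullback.lift_fst _ _ _, pullback.lift_snd _ _ _, rfl, rfl,
      Arrow.toBaseChange_comp_baseChangeFst _ _ _ _⟩⟩
end
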